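/- Let p and p̃ be probability density functions of univariate real random variables, let Q_K be the probability mass function of the rank statistic A_K, and define d_K(p, p̃) = (1/(K+1)) · Σ_{n=0}^{K} |1/(K+1) − Q_K(n)|. If ‖p − p̃‖_{L¹(ℝ)} ≤ ε, then d_K(p, p̃) ≤ ε; that is, d_K is continuous with respect to the L¹(ℝ) norm. -/

import Mathlib

open MeasureTheory

/-- The pmf of the rank statistic `A_K`:
`Q_K(n) = ∫ C(K,n) F̃(y)^n (1 - F̃(y))^{K-n} p(y) dy`, where `F̃` is the cdf of `p̃`. -/
noncomputable def rankPMF (p Ftilde : ℝ → ℝ) (K n : ℕ) : ℝ :=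
  ∫ y, (K.choose n : ℝ) * Ftilde y ^ n * (1 - Ftilde y) ^ (K - n) * p y

/-- The ISL discrepancy `d_K(p, p̃) = (1/(K+1)) Σ_{n=0}^K |1/(K+1) - Q_K(n)|`. -/
noncomputable def dISL (p Ftilde : ℝ → ℝ) (K : ℕ) : ℝ :=
  (1 / (K + 1 : ℝ)) *
    ∑ n ∈ Finset.range (K + 1), |1 / (K + 1 : ℝ) - rankPMF p Ftilde K n|

/-! For `Ỹ ∼ p̃` the variable `F̃(Ỹ)` is uniform on `[0, 1]` (probability integral transform), so
by the Beta integral `∫₀¹ C(K,n) uⁿ (1-u)^(K-n) du = 1/(K+1)` the rank pmf of `p̃` against its own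
cdf is exactly uniform. Hence `1/(K+1) - Q_K(n)` is the difference of the integrals of one Bernstein
weight `C(K,n) F̃ⁿ (1-F̃)^(K-n) ∈ [0, 1]` against `p̃` and against `p`, which is at most
`‖p - p̃‖₁ ≤ ε`; averaging over `n` gives `d_K ≤ ε`. -/

open ProbabilityTheory Set Filter
open scoped Nat

theorem integral_pow_mul_one_sub_pow (n m : ℕ) :
    ∫ x in (0:ℝ)..1, x ^ n * (1 - x) ^ m = n ! * m ! / (n + m + 1)! := by
  apply Complex.ofReal_injective
  have hsum : (n + 1 : ℂ) + (m + 1) = ((n + m + 1 : ℕ) : ℂ) + 1 := by push_cast; ring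
  have hβ := Complex.betaIntegral_eq_Gamma_mul_div (n + 1) (m + 1)
    (by simp only [Complex.add_re, Complex.natCast_re, Complex.one_re]; positivity)
    (by simp only [Complex.add_re, Complex.natCast_re, Complex.one_re]; positivity)
  rw [hsum, Complex.Gamma_nat_eq_factorial, Complex.Gamma_nat_eq_factorial,
    Complex.Gamma_nat_eq_factorial] at hβ
  simp only [Complex.betaIntegral, add_sub_cancel_right, Complex.cpow_natCast] at hβ
  rw [← intervalIntegral.integral_ofReal]
  push_cast
  exact hβ

theorem integral_choose_mul_pow_mul_one_sub_pow {K n : ℕ} (hn : n ≤ K) :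
    ∫ x in (0:ℝ)..1, (K.choose n : ℝ) * x ^ n * (1 - x) ^ (K - n) = 1 / (K + 1) := by
  simp_rw [mul_assoc]
  rw [intervalIntegral.integral_const_mul, integral_pow_mul_one_sub_pow, Nat.add_sub_cancel' hn,
    Nat.cast_choose ℝ hn, Nat.factorial_succ]
  push_cast
  field_simp

theorem choose_mul_pow_mul_one_sub_pow_le_one (K n : ℕ) {x : ℝ} (h0 : 0 ≤ x) (h1 : x ≤ 1) :
    (K.choose n : ℝ) * x ^ n * (1 - x) ^ (K - n) ≤ 1 := by
  rcases lt_or_ge K n with hKn | hnK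
  · simp [Nat.choose_eq_zero_of_lt hKn]
  have hx : 0 ≤ 1 - x := by linarith
  calc (K.choose n : ℝ) * x ^ n * (1 - x) ^ (K - n)
      = x ^ n * (1 - x) ^ (K - n) * K.choose n := by ring
    _ ≤ ∑ m ∈ Finset.range (K + 1), x ^ m * (1 - x) ^ (K - m) * K.choose m :=
      Finset.single_le_sum (f := fun m => x ^ m * (1 - x) ^ (K - m) * (K.choose m : ℝ))
        (fun m _ => by positivity) (Finset.mem_range_succ_iff.mpr hnK)
    _ = 1 := by rw [← add_pow, add_sub_cancel, one_pow]

section ProbabilityIntegralTransform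

variable (μ : Measure ℝ) [IsProbabilityMeasure μ]

theorem measure_cdf_preimage_Iic (hF : Continuous (cdf μ)) {t : ℝ} (ht0 : 0 ≤ t) (ht1 : t < 1) :
    μ (cdf μ ⁻¹' Iic t) = ENNReal.ofReal t := by
  set S := cdf μ ⁻¹' Iic t
  obtain ⟨b, hb⟩ := ((tendsto_cdf_atTop μ).eventually (eventually_gt_nhds ht1)).exists
  rcases S.eq_empty_or_nonempty with hS | hS
  · obtain rfl : t = 0 := by
      refine le_antisymm (not_lt.mp fun ht => ?_) ht0
      obtain ⟨a, ha⟩ := ((tendsto_cdf_atBot μ).eventually (eventually_lt_nhds ht)).exists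
      exact hS.subset (show a ∈ S from ha.le)
    rw [hS, measure_empty, ENNReal.ofReal_zero]
  obtain ⟨y, hy⟩ : t ∈ range (cdf μ) :=
    mem_range_of_exists_le_of_exists_ge hF hS ⟨b, hb.le⟩
  have hbdd : BddAbove S := ⟨b, fun x hx => not_lt.mp fun hbx =>
    (hb.trans_le ((monotone_cdf μ) hbx.le)).not_ge hx⟩
  have hSc : S = Iic (sSup S) := by
    rw [← lowerClosure_eq_Iic_csSup hS hbdd (isClosed_Iic.preimage hF),
      (isLowerSet_Iic t).preimage (monotone_cdf μ) |>.lowerClosure]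
  have hcS : sSup S ∈ S := hSc.symm.subset self_mem_Iic
  have hyS : y ∈ S := show cdf μ y ≤ t from hy.le
  have hc : cdf μ (sSup S) = t :=
    le_antisymm hcS (hy ▸ monotone_cdf μ (hSc.subset hyS))
  rw [hSc, ← ofReal_cdf, hc]

theorem map_cdf_eq_restrict_Ioc (hF : Continuous (cdf μ)) :
    μ.map (cdf μ) = volume.restrict (Ioc 0 1) := by
  refine Measure.ext_of_Iic _ _ fun t => ?_
  rw [Measure.map_apply hF.measurable measurableSet_Iic, Measure.restrict_apply measurableSet_Iic]
  rcases lt_or_ge t 0 with ht0 | ht0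
  · have hS : cdf μ ⁻¹' Iic t = ∅ :=
      eq_empty_of_forall_notMem fun x hx => (ht0.trans_le (cdf_nonneg μ x)).not_ge hx
    simp [hS, Iic_inter_Ioc_of_le (ht0.trans zero_lt_one).le, ht0.le]
  rcases lt_or_ge t 1 with ht1 | ht1
  · rw [measure_cdf_preimage_Iic μ hF ht0 ht1, Iic_inter_Ioc_of_le ht1.le, Real.volume_Ioc,
      sub_zero]
  · have hS : cdf μ ⁻¹' Iic t = univ := eq_univ_of_forall fun x => (cdf_le_one μ x).trans ht1
    rw [hS, measure_univ, inter_eq_right.mpr fun x hx => hx.2.trans ht1, Real.volume_Ioc,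
      sub_zero, ENNReal.ofReal_one]

theorem integral_comp_cdf (hF : Continuous (cdf μ)) {g : ℝ → ℝ}
    (hg : AEStronglyMeasurable g (volume.restrict (Ioc 0 1))) :
    ∫ y, g (cdf μ y) ∂μ = ∫ u in (0:ℝ)..1, g u := by
  rw [intervalIntegral.integral_of_le zero_le_one, ← map_cdf_eq_restrict_Ioc μ hF,
    integral_map hF.aemeasurable]
  rwa [map_cdf_eq_restrict_Ioc μ hF]

end ProbabilityIntegralTransform

section

variable {α : Type*} [MeasurableSpace α] {μ : Measure α}

theorem abs_integral_mul_sub_integral_mul_le {g p q : α → ℝ} (hg : AEStronglyMeasurable g μ)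
    (hg_le : ∀ᵐ x ∂μ, |g x| ≤ 1) (hp : Integrable p μ) (hq : Integrable q μ) :
    |∫ x, g x * p x ∂μ - ∫ x, g x * q x ∂μ| ≤ ∫ x, |p x - q x| ∂μ := by
  have hg_norm : ∀ᵐ x ∂μ, ‖g x‖ ≤ 1 := hg_le
  rw [← integral_sub (hp.bdd_mul hg hg_norm) (hq.bdd_mul hg hg_norm)]
  refine abs_integral_le_integral_abs.trans <|
    integral_mono_of_nonneg (ae_of_all _ fun _ => abs_nonneg _) (hp.sub hq).abs ?_
  filter_upwards [hg_le] with x hx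
  rw [← mul_sub, abs_mul]
  exact mul_le_of_le_one_left (abs_nonneg _) hx

theorem isProbabilityMeasure_withDensity_ofReal {f : α → ℝ} (hf_nonneg : 0 ≤ᵐ[μ] f)
    (hf_int : Integrable f μ) (hf_one : ∫ x, f x ∂μ = 1) :
    IsProbabilityMeasure (μ.withDensity fun x => ENNReal.ofReal (f x)) := by
  constructor
  rw [withDensity_apply _ MeasurableSet.univ, setLIntegral_univ,
    ← ofReal_integral_eq_lintegral_ofReal hf_int hf_nonneg, hf_one, ENNReal.ofReal_one]

theorem integral_withDensity_ofReal {f : α → ℝ} (hf_nonneg : 0 ≤ᵐ[μ] f)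
    (hf_meas : AEMeasurable f μ) (g : α → ℝ) :
    ∫ x, g x ∂(μ.withDensity fun x => ENNReal.ofReal (f x)) = ∫ x, g x * f x ∂μ := by
  rw [integral_withDensity_eq_integral_toReal_smul₀ hf_meas.ennreal_ofReal
    (ae_of_all _ fun _ => ENNReal.ofReal_lt_top)]
  refine integral_congr_ae (hf_nonneg.mono fun x hx => ?_)
  simp [ENNReal.toReal_ofReal hx, mul_comm]

end

theorem continuous_integral_Iic {f : ℝ → ℝ} (hf : Integrable f) :
    Continuous fun y => ∫ x in Iic y, f x :=
  continuous_iff_continuousAt.mpr fun y =>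
    (hf.integrableOn.continuousOn_Iic_primitive_Iic (a₀ := y + 1)).continuousAt
      (Iic_mem_nhds (lt_add_one y))

theorem cdf_withDensity_ofReal {p : ℝ → ℝ} (hp_nonneg : ∀ x, 0 ≤ p x) (hp_int : Integrable p)
    (hp_one : ∫ x, p x = 1) :
    ⇑(cdf (volume.withDensity fun x => ENNReal.ofReal (p x))) = fun y => ∫ x in Iic y, p x := by
  have := isProbabilityMeasure_withDensity_ofReal (ae_of_all _ hp_nonneg) hp_int hp_one
  ext y
  rw [cdf_eq_real, measureReal_def, withDensity_apply _ measurableSet_Iic,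
    ← ofReal_integral_eq_lintegral_ofReal hp_int.integrableOn (ae_of_all _ hp_nonneg),
    ENNReal.toReal_ofReal (setIntegral_nonneg measurableSet_Iic fun x _ => hp_nonneg x)]

theorem abs_rankPMF_sub_rankPMF_le {p q F : ℝ → ℝ} (hF : AEStronglyMeasurable F)
    (hF_mem : ∀ y, F y ∈ Icc 0 1) (hp : Integrable p) (hq : Integrable q) (K n : ℕ) :
    |rankPMF p F K n - rankPMF q F K n| ≤ ∫ x, |p x - q x| := by
  refine abs_integral_mul_sub_integral_mul_le (by fun_prop) (ae_of_all _ fun y => ?_) hp hq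
  obtain ⟨h0, h1⟩ := hF_mem y
  have h1' : 0 ≤ 1 - F y := sub_nonneg.mpr h1
  rw [abs_of_nonneg (by positivity)]
  exact choose_mul_pow_mul_one_sub_pow_le_one K n h0 h1

theorem rankPMF_cdf_withDensity {p : ℝ → ℝ} (hp_nonneg : ∀ x, 0 ≤ p x) (hp_int : Integrable p)
    (hp_one : ∫ x, p x = 1) {K n : ℕ} (hn : n ≤ K) :
    rankPMF p (cdf (volume.withDensity fun x => ENNReal.ofReal (p x))) K n = 1 / (K + 1) := by
  set μ := volume.withDensity fun x => ENNReal.ofReal (p x)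
  have := isProbabilityMeasure_withDensity_ofReal (ae_of_all _ hp_nonneg) hp_int hp_one
  have hcont : Continuous (cdf μ) :=
    cdf_withDensity_ofReal hp_nonneg hp_int hp_one ▸ continuous_integral_Iic hp_int
  rw [rankPMF, ← integral_withDensity_ofReal (ae_of_all _ hp_nonneg) hp_int.aemeasurable,
    ← integral_choose_mul_pow_mul_one_sub_pow hn]
  exact integral_comp_cdf μ hcont (g := fun u => (K.choose n : ℝ) * u ^ n * (1 - u) ^ (K - n))
    (by fun_prop)

theorem dISL_le_of_forall_abs_sub_le {p F : ℝ → ℝ} {K : ℕ} {ε : ℝ}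
    (h : ∀ n ≤ K, |1 / (K + 1 : ℝ) - rankPMF p F K n| ≤ ε) :
    dISL p F K ≤ ε := by
  have hsum : ∑ n ∈ Finset.range (K + 1), |1 / (K + 1 : ℝ) - rankPMF p F K n| ≤ (K + 1) * ε := by
    simpa using Finset.sum_le_sum fun n hn => h n (Finset.mem_range_succ_iff.mp hn)
  rw [dISL, one_div_mul_eq_div, div_le_iff₀ (by positivity), mul_comm]
  exact hsum

theorem dISL_le_of_L1_close_general
    (p ptilde : ℝ → ℝ) (Ftilde : ℝ → ℝ) (ε : ℝ)
    (hp_int : Integrable p)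
    (hpt_nonneg : ∀ x, 0 ≤ ptilde x) (hpt_int : Integrable ptilde)
    (hpt_one : ∫ x, ptilde x = 1)
    (hF : ∀ y, Ftilde y = ∫ x in Set.Iic y, ptilde x)
    (hL1 : (∫ x, |p x - ptilde x|) ≤ ε)
    (K : ℕ) :
    dISL p Ftilde K ≤ ε := by
  have hcdf : ⇑(cdf (volume.withDensity fun x => ENNReal.ofReal (ptilde x))) = Ftilde :=
    (cdf_withDensity_ofReal hpt_nonneg hpt_int hpt_one).trans (funext hF).symm
  have hF_cont : Continuous Ftilde := funext hF ▸ continuous_integral_Iic hpt_int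
  have hF_mem (y : ℝ) : Ftilde y ∈ Icc 0 1 := hcdf ▸ ⟨cdf_nonneg _ y, cdf_le_one _ y⟩
  refine dISL_le_of_forall_abs_sub_le fun n hn => ?_
  have h_uniform : rankPMF ptilde Ftilde K n = 1 / (K + 1) :=
    hcdf ▸ rankPMF_cdf_withDensity hpt_nonneg hpt_int hpt_one hn
  rw [← h_uniform, abs_sub_comm]
  exact (abs_rankPMF_sub_rankPMF_le hF_cont.aestronglyMeasurable hF_mem hp_int hpt_int K n).trans
    hL1

/-- **`d_K` is continuous w.r.t. the L¹ norm.** For probability densities `p, p̃` on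
`ℝ` (with `F̃` the cdf of `p̃`), if `‖p - p̃‖_{L¹(ℝ)} ≤ ε` then `d_K(p, p̃) ≤ ε`. -/
theorem dISL_le_of_L1_close
    (p ptilde : ℝ → ℝ) (Ftilde : ℝ → ℝ) (ε : ℝ)
    (hp_nonneg : ∀ x, 0 ≤ p x) (hp_int : Integrable p)
    (hp_one : ∫ x, p x = 1)
    (hpt_nonneg : ∀ x, 0 ≤ ptilde x) (hpt_int : Integrable ptilde)
    (hpt_one : ∫ x, ptilde x = 1)
    (hF : ∀ y, Ftilde y = ∫ x in Set.Iic y, ptilde x)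
    (hL1 : (∫ x, |p x - ptilde x|) ≤ ε)
    (K : ℕ) :
    dISL p Ftilde K ≤ ε :=
  dISL_le_of_L1_close_general p ptilde Ftilde ε hp_int hpt_nonneg hpt_int hpt_one hF hL1 K
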